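/- arXiv:1006.2360 — 7 statements merged into one kernel-verified Lean document; each statement's English description precedes it below -/
import Mathlib

section
/- Let D: ℝ₊ⁿ → ℝ₊ⁿ be a diagonal homeomorphism D(s) = (D₁(s₁),…,Dₙ(sₙ)) where each Dᵢ: ℝ₊ → ℝ₊ is a continuous strictly increasing bijection, and let Γ: ℝ₊ⁿ → ℝ₊ⁿ be monotone (order-preserving for the componentwise order). Then the condition 'D(Γ(v)) ≱ v for all v ∈ ℝ₊ⁿ \ {0}' is equivalent to 'Γ(D(w)) ≱ w for all w ∈ ℝ₊ⁿ \ {0}'. Here x ≱ y means there exists an index i with xᵢ < yᵢ. -/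
open NNReal

theorem OrderIso.map_zero_of_isBotZeroClass {α β : Type*} [Preorder α] [PartialOrder β]
    [Zero α] [Zero β] [IsBotZeroClass α] [IsBotZeroClass β] (e : α ≃o β) : e 0 = 0 :=
  IsBotZeroClass.isBot_zero.isMin_iff.mp (e.isMin_apply.mpr IsBotZeroClass.isBot_zero.isMin)

/-- Substituting `v = D w` turns one condition into the other, because each `D i` reflects `<`
and the diagonal map `w ↦ D w` is a bijection fixing `0`. -/
theorem forall_ne_zero_exists_diagonal_lt_iff {ι α β : Type*} [Preorder α] [PartialOrder β]
    [Zero α] [Zero β] [IsBotZeroClass α] [IsBotZeroClass β]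
    (D : ι → α ≃o β) (Γ : (ι → β) → ι → α) :
    (∀ v : ι → β, v ≠ 0 → ∃ i, D i (Γ v i) < v i) ↔
    (∀ w : ι → α, w ≠ 0 → ∃ i, Γ (fun j => D j (w j)) i < w i) := by
  let E : (ι → α) → ι → β := fun w j => D j (w j)
  have hE_surjective : E.Surjective := fun v =>
    ⟨fun j => (D j).symm (v j), funext fun j => (D j).apply_symm_apply (v j)⟩
  have hE_eq_zero (w : ι → α) : E w = 0 ↔ w = 0 := by
    simp only [E, funext_iff, Pi.zero_apply]
    refine forall_congr' fun j => ?_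
    rw [← (D j).map_zero_of_isBotZeroClass, (D j).apply_eq_iff_eq]
  rw [hE_surjective.forall]
  refine forall_congr' fun w => ?_
  simp only [ne_eq, hE_eq_zero, E, (D _).lt_iff_lt]

theorem sg_DGamma_iff_GammaD_general (n : ℕ) (D : Fin n → ℝ≥0 → ℝ≥0)
    (hD : ∀ i, Continuous (D i) ∧ StrictMono (D i) ∧ Function.Bijective (D i))
    (Γ : (Fin n → ℝ≥0) → Fin n → ℝ≥0) :
    (∀ v : Fin n → ℝ≥0, v ≠ 0 → ∃ i, D i (Γ v i) < v i) ↔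
    (∀ w : Fin n → ℝ≥0, w ≠ 0 → ∃ i, Γ (fun j => D j (w j)) i < w i) :=
  forall_ne_zero_exists_diagonal_lt_iff
    (fun i => StrictMono.orderIsoOfSurjective (D i) (hD i).2.1 (hD i).2.2.2) Γ

/-- The small gain conditions `D ∘ Γ ≱ id` and `Γ ∘ D ≱ id` are equivalent for a
diagonal homeomorphism `D` and a monotone operator `Γ`. -/
theorem sg_DGamma_iff_GammaD (n : ℕ) (D : Fin n → ℝ≥0 → ℝ≥0)
    (hD : ∀ i, Continuous (D i) ∧ StrictMono (D i) ∧ Function.Bijective (D i))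
    (Γ : (Fin n → ℝ≥0) → Fin n → ℝ≥0) (hΓ : Monotone Γ) :
    (∀ v : Fin n → ℝ≥0, v ≠ 0 → ∃ i, D i (Γ v i) < v i) ↔
    (∀ w : Fin n → ℝ≥0, w ≠ 0 → ∃ i, Γ (fun j => D j (w j)) i < w i) :=
  sg_DGamma_iff_GammaD_general n D hD Γ
end

section
/- If σ: [0,∞) → ℝ₊ⁿ is a continuous path with each component σᵢ ∈ K∞, Γ: ℝ₊ⁿ → ℝ₊ⁿ is monotone (with respect to the componentwise order), and Γ(σ(τ)) < σ(τ) (componentwise strict) for all τ > 0, then Γ(s) ≱ s for all s ∈ ℝ₊ⁿ \ {0}. -/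
open NNReal

/-- A function is of class K∞: continuous, strictly increasing, unbounded, and 0 at 0. -/
def KInf (f : ℝ≥0 → ℝ≥0) : Prop :=
  Continuous f ∧ StrictMono f ∧ f 0 = 0 ∧ ∀ M : ℝ≥0, ∃ r, M < f r

theorem KInf.surjective {f : ℝ≥0 → ℝ≥0} (hf : KInf f) : Function.Surjective f := by
  obtain ⟨hcont, -, hzero, hunbdd⟩ := hf
  intro y
  obtain ⟨r, hr⟩ := hunbdd y
  obtain ⟨t, -, ht⟩ := intermediate_value_Icc (zero_le (a := r)) hcont.continuousOn
    (⟨by simp [hzero], hr.le⟩ : y ∈ Set.Icc (f 0) (f r))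
  exact ⟨t, ht⟩

/-- `τ` is the largest of the times at which the components of `σ` reach those of `s`. -/
theorem exists_pos_le_path_and_eq {ι : Type*} [Finite ι] {σ : ι → ℝ≥0 → ℝ≥0}
    (hσ : ∀ i, KInf (σ i)) {s : ι → ℝ≥0} (hs : s ≠ 0) :
    ∃ τ, 0 < τ ∧ s ≤ (fun i => σ i τ) ∧ ∃ j, σ j τ = s j := by
  choose t ht using fun i => (hσ i).surjective (s i)
  obtain ⟨i₀, hi₀⟩ : ∃ i, s i ≠ 0 := Function.ne_iff.mp hs
  have : Nonempty ι := ⟨i₀⟩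
  obtain ⟨j, hj⟩ := Finite.exists_max t
  have ht_pos : 0 < t i₀ := by
    refine pos_iff_ne_zero.mpr fun h => hi₀ ?_
    rw [← ht i₀, h, (hσ i₀).2.2.1]
  refine ⟨t j, ht_pos.trans_le (hj i₀), fun i => ?_, j, ht j⟩
  calc s i = σ i (t i) := (ht i).symm
    _ ≤ σ i (t j) := (hσ i).2.1.monotone (hj i)

/-- If an Ω-path exists for a monotone Γ (Γ(σ(τ)) < σ(τ) componentwise for all τ > 0),
then Γ satisfies the small gain condition Γ(s) ≱ s for all s ≠ 0. -/
theorem omega_path_implies_small_gain (n : ℕ)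
    (σ : Fin n → ℝ≥0 → ℝ≥0) (hσ : ∀ i, KInf (σ i))
    (Γ : (Fin n → ℝ≥0) → Fin n → ℝ≥0) (hΓ : Monotone Γ)
    (hpath : ∀ τ : ℝ≥0, 0 < τ → ∀ i, Γ (fun j => σ j τ) i < σ i τ) :
    ∀ s : Fin n → ℝ≥0, s ≠ 0 → ∃ i, Γ s i < s i := by
  intro s hs
  obtain ⟨τ, hτ, hle, j, hj⟩ := exists_pos_le_path_and_eq hσ hs
  refine ⟨j, ?_⟩
  calc Γ s j ≤ Γ (fun i => σ i τ) j := hΓ hle j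
    _ < σ j τ := hpath τ hτ j
    _ = s j := hj
end

section
/- Small gain condition for n = 2 with mixed formulation: let γ₁₂, γ₂₁ ∈ K∞ and α ∈ K∞, and suppose for all r > 0: γ₁₂(γ₂₁((id+α)(r))) < r (where subsystem 1 uses the sum formulation and subsystem 2 the max formulation). Then the operator Γ∘D_α with Γ(s₁,s₂) = (γ₁₂(s₂), γ₂₁(s₁)) and D_α(s₁,s₂) = ((id+α)(s₁), s₂) satisfies Γ(D_α(s)) ≱ s for all s ∈ ℝ₊² \ {0}. -/
open NNReal

/-! If both inequalities of `Γ(D_α s) ≥ s` held with `s₁ > 0`, monotonicity of `γ₁₂` would give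
`s₁ ≤ γ₁₂(s₂) ≤ γ₁₂(γ₂₁((id+α)(s₁))) < s₁`. If `s₁ = 0`, the second component of `Γ(D_α s)`
vanishes while `s₂ > 0`. -/

theorem KInf.map_zero {f : ℝ≥0 → ℝ≥0} (hf : KInf f) : f 0 = 0 := hf.2.2.1

theorem KInf.monotone {f : ℝ≥0 → ℝ≥0} (hf : KInf f) : Monotone f := hf.2.1.monotone

theorem Monotone.lt_or_lt_of_comp_lt {β γ : Type*} [LinearOrder β] [LinearOrder γ]
    {g : γ → β} {f : β → γ} (hg : Monotone g) {x : β} (hx : g (f x) < x) (y : γ) : g y < x ∨ f x < y := by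
  by_contra! h
  exact (h.1.trans (hg h.2)).not_gt hx

/-- Mixed small gain condition for n = 2: if γ₁₂∘γ₂₁∘(id+α) < id on (0,∞), then
Γ∘D_α(s) ≱ s for all s ∈ ℝ₊² \ {0}, where Γ∘D_α(s₁,s₂) = (γ₁₂(s₂), γ₂₁((id+α)(s₁))). -/
theorem small_gain_n2_mixed (γ12 γ21 α : ℝ≥0 → ℝ≥0)
    (h12 : KInf γ12) (h21 : KInf γ21) (hα : KInf α)
    (hsg : ∀ r : ℝ≥0, 0 < r → γ12 (γ21 (r + α r)) < r) :
    ∀ s : Fin 2 → ℝ≥0, s ≠ 0 →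
      γ12 (s 1) < s 0 ∨ γ21 (s 0 + α (s 0)) < s 1 := by
  intro s hs
  rcases eq_zero_or_pos (s 0) with h0 | h0
  · have h1 : s 1 ≠ 0 := fun h1 => hs (funext (Fin.forall_fin_two.2 ⟨h0, h1⟩))
    right
    rw [h0, hα.map_zero, add_zero, h21.map_zero]
    exact pos_iff_ne_zero.2 h1
  · exact h12.monotone.lt_or_lt_of_comp_lt (f := fun r => γ21 (r + α r)) (hsg _ h0) (s 1)
end

section
/- Let Γ: ℝ₊ⁿ → ℝ₊ⁿ be monotone with components Γᵢ given by either sums or maxima of K∞-or-zero gains γᵢⱼ (γᵢᵢ = 0), and suppose there is α ∈ K∞ so that Γ∘D_α ≱ id on ℝ₊ⁿ \ {0} where D_α applies (id+α) to coordinates in I_Σ and identity to coordinates in I_max. Then there exists φ ∈ K∞ such that for all w, v ∈ ℝ₊ⁿ, the inequality w ≤ μ(Γ(w), v) implies |w|_max ≤ φ(|v|_max), where μᵢ(a,b) = a+b for i ∈ I_Σ and μᵢ(a,b) = max{a,b} for i ∈ I_max. Moreover φ can be chosen as φ(r) = max over components of [D̃∘μ(Γ,id)]ⁿ(r,…,r),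 with D̃ the diagonal operator applying id+α⁻¹ on I_Σ coordinates and identity on I_max coordinates. -/
/-!
Let `r = |v|_max` and `Xₖ = Mᵏ(r, …, r)` with `M = D̃ ∘ μ(Γ, id)`; the `Xₖ` increase, since
`M ≥ id`. Whenever `w ≰ Xₖ`, apply the small gain condition to `s = D_α⁻¹ d`, where `d` agrees
with `w` where `w` exceeds `Xₖ` and vanishes elsewhere. Because `Γ (a ⊔ b) ≤ μ(Γ a, Γ b)`, the
coordinate `i` it produces satisfies `Xₖ,ᵢ < wᵢ ≤ M(Xₖ)ᵢ`. So the set of coordinates where `w`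
exceeds `Xₖ` loses an element at every step, and `w ≤ Xₙ`. Finally `φ` is of class K∞ because
`M` is continuous, fixes `0`, dominates the identity and preserves strict componentwise order.
-/

open NNReal Finset

def IsGain (f : ℝ≥0 → ℝ≥0) : Prop :=
  KInf f ∨ f = fun _ => 0

namespace IsGain

variable {f : ℝ≥0 → ℝ≥0}

theorem monotone (h : IsGain f) : Monotone f := by
  rcases h with h | rfl
  exacts [h.2.1.monotone, monotone_const]

theorem map_zero (h : IsGain f) : f 0 = 0 := by
  rcases h with h | rfl
  exacts [h.2.2.1, rfl]

theorem continuous (h : IsGain f) : Continuous f := by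
  rcases h with h | rfl
  exacts [h.1, continuous_const]

theorem lt_max_of_lt {a b c : ℝ≥0} (h : IsGain f) (hab : a < b) (hc : 0 < c) :
    f a < max (f b) c := by
  rcases h with h | rfl
  exacts [lt_max_of_lt_left (h.2.1 hab), lt_max_of_lt_right hc]

end IsGain

theorem surjective_add_self {f : ℝ≥0 → ℝ≥0} (hf : Continuous f) (hf0 : f 0 = 0) :
    Function.Surjective fun t => t + f t := by
  intro y
  obtain ⟨t, -, ht⟩ := intermediate_value_Icc (zero_le : 0 ≤ y)
    (continuous_id.add hf).continuousOn
    (show y ∈ Set.Icc (0 + f 0) (y + f y) from ⟨by simp [hf0], le_self_add⟩)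
  exact ⟨t, ht⟩

theorem add_le_add_symm_of_lt (e : ℝ≥0 ≃o ℝ≥0) {c s y : ℝ≥0} (hc : c < s)
    (h : s + e s ≤ c + y) : s + e s ≤ y + e.symm y := by
  have hcy : e c ≤ y :=
    (lt_of_add_lt_add_left ((add_lt_add hc (e.strictMono hc)).trans_le h)).le
  calc s + e s ≤ c + y := h
    _ ≤ e.symm y + y := add_le_add_left (e.le_symm_apply.2 hcy) y
    _ = y + e.symm y := add_comm _ _

theorem le_of_card_le_of_exists_lt_le_succ {ι α : Type*} [Fintype ι] [LinearOrder α]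
    {X : ℕ → ι → α} (hX : Monotone X) {w : ι → α}
    (hstep : ∀ k, (∃ i, X k i < w i) → ∃ i, X k i < w i ∧ w i ≤ X (k + 1) i)
    {k : ℕ} (hk : Fintype.card ι ≤ k) : w ≤ X k := by
  classical
  let Z : ℕ → Finset ι := fun k => univ.filter fun i => X k i < w i
  have hZ : ∀ k, #(Z k) ≤ Fintype.card ι - k := by
    intro k
    induction k with
    | zero => exact card_filter_le _ _
    | succ k ih =>
      have hsub : Z (k + 1) ⊆ Z k := fun i hi =>
        mem_filter.2 ⟨mem_univ i, (hX k.le_succ i).trans_lt (mem_filter.1 hi).2⟩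
      by_cases hne : ∃ i, X k i < w i
      · obtain ⟨i, hik, hik'⟩ := hstep k hne
        have := card_lt_card <| (ssubset_iff_of_subset hsub).2
          ⟨i, by simp [Z, hik], by simp [Z, hik']⟩
        omega
      · have : Z (k + 1) = ∅ :=
          subset_empty.1 (hsub.trans (filter_eq_empty_iff.2 fun i _ h => hne ⟨i, h⟩).subset)
        simp [this]
  intro i
  by_contra h
  have hi : i ∈ Z k := mem_filter.2 ⟨mem_univ i, not_le.1 h⟩
  have := card_pos.2 ⟨i, hi⟩
  have := hZ k
  omega

section Operators

variable {ι : Type*} [DecidableEq ι] (S : Finset ι)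

/-- The paper's `μ`. -/
def mix (w v : ι → ℝ≥0) : ι → ℝ≥0 :=
  fun i => if i ∈ S then w i + v i else max (w i) (v i)

/-- The paper's `D_α` for `f = α`, and `D̃` for `f = α⁻¹`. -/
def diagOp (f : ℝ≥0 → ℝ≥0) (s : ι → ℝ≥0) : ι → ℝ≥0 :=
  fun i => if i ∈ S then s i + f (s i) else s i

variable {S}

theorem mix_mono {w w' v v' : ι → ℝ≥0} (hw : w ≤ w') (hv : v ≤ v') :
    mix S w v ≤ mix S w' v' := by
  intro i
  unfold mix
  split_ifs
  exacts [add_le_add (hw i) (hv i), max_le_max (hw i) (hv i)]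

theorem right_le_mix (w v : ι → ℝ≥0) : v ≤ mix S w v := by
  intro i
  unfold mix
  split_ifs
  exacts [le_add_self, le_max_right _ _]

theorem mix_assoc (a b c : ι → ℝ≥0) : mix S (mix S a b) c = mix S a (mix S b c) := by
  funext i
  unfold mix
  split_ifs
  exacts [add_assoc _ _ _, max_assoc _ _ _]

theorem Continuous.mix {X : Type*} [TopologicalSpace X] {w v : X → ι → ℝ≥0}
    (hw : Continuous w) (hv : Continuous v) : Continuous fun x => mix S (w x) (v x) := by
  refine continuous_pi fun i => ?_
  unfold _root_.mix
  split_ifs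
  exacts [(continuous_apply i |>.comp hw).add (continuous_apply i |>.comp hv),
    (continuous_apply i |>.comp hw).max (continuous_apply i |>.comp hv)]

theorem le_diagOp (f : ℝ≥0 → ℝ≥0) (s : ι → ℝ≥0) : s ≤ diagOp S f s := by
  intro i
  unfold diagOp
  split_ifs
  exacts [le_self_add, le_rfl]

theorem diagOp_zero {f : ℝ≥0 → ℝ≥0} (hf : f 0 = 0) : diagOp S f 0 = 0 := by
  funext i
  simp [diagOp, hf]

theorem diagOp_strongLT {f : ℝ≥0 → ℝ≥0} (hf : Monotone f) {s s' : ι → ℝ≥0}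
    (h : StrongLT s s') : StrongLT (diagOp S f s) (diagOp S f s') := by
  intro i
  unfold diagOp
  split_ifs
  exacts [add_lt_add_of_lt_of_le (h i) (hf (h i).le), h i]

theorem continuous_diagOp {f : ℝ≥0 → ℝ≥0} (hf : Continuous f) : Continuous (diagOp S f) := by
  refine continuous_pi fun i => ?_
  unfold diagOp
  split_ifs
  exacts [(continuous_apply i).add (hf.comp (continuous_apply i)), continuous_apply i]

theorem diagOp_surjective {f : ℝ≥0 → ℝ≥0} (hf : Continuous f) (hf0 : f 0 = 0) :
    Function.Surjective (diagOp S f) := by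
  choose g hg using surjective_add_self hf hf0
  refine fun u => ⟨fun i => if i ∈ S then g (u i) else u i, funext fun i => ?_⟩
  simp only [diagOp]
  split_ifs
  exacts [hg _, rfl]

end Operators

section GainOperator

variable {ι : Type*} [Fintype ι] [DecidableEq ι] {S : Finset ι} {γ : ι → ι → ℝ≥0 → ℝ≥0}

variable (S γ) in
/-- The paper's `Γ`. -/
def gainOp (s : ι → ℝ≥0) : ι → ℝ≥0 :=
  fun i => if i ∈ S then ∑ j, γ i j (s j) else univ.sup fun j => γ i j (s j)

variable (S γ) in
/-- The paper's `D̃ ∘ μ(Γ, id)`, with `β` in the role of `α⁻¹`. -/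
def smallGainMap (β : ℝ≥0 → ℝ≥0) (v : ι → ℝ≥0) : ι → ℝ≥0 :=
  diagOp S β (mix S (gainOp S γ v) v)

theorem gainOp_mono (hγ : ∀ i j, Monotone (γ i j)) : Monotone (gainOp S γ) := by
  intro u u' h i
  unfold gainOp
  split_ifs
  exacts [sum_le_sum fun j _ => hγ i j (h j), sup_mono_fun fun j _ => hγ i j (h j)]

theorem gainOp_sup_le (hγ : ∀ i j, Monotone (γ i j)) (a b : ι → ℝ≥0) :
    gainOp S γ (a ⊔ b) ≤ mix S (gainOp S γ a) (gainOp S γ b) := by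
  intro i
  simp only [gainOp, mix]
  split_ifs
  · rw [← sum_add_distrib]
    refine sum_le_sum fun j _ => ?_
    rw [Pi.sup_apply, (hγ i j).map_sup]
    exact sup_le le_self_add le_add_self
  · simp only [Pi.sup_apply, (hγ _ _).map_sup]
    exact (sup_sup (f := fun j => γ i j (a j)) (g := fun j => γ i j (b j))).le

theorem gainOp_zero (hγ : ∀ i j, γ i j 0 = 0) : gainOp S γ 0 = 0 := by
  funext i
  simp [gainOp, hγ]

theorem continuous_gainOp (hγ : ∀ i j, Continuous (γ i j)) : Continuous (gainOp S γ) := by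
  refine continuous_pi fun i => ?_
  have hγi : ∀ j, Continuous fun s : ι → ℝ≥0 => γ i j (s j) :=
    fun j => (hγ i j).comp (continuous_apply j)
  unfold gainOp
  split_ifs
  exacts [continuous_finsetSum _ fun j _ => hγi j,
    Continuous.finset_sup_apply fun j _ => hγi j]

theorem mix_gainOp_strongLT (hγ : ∀ i j, IsGain (γ i j)) {u u' : ι → ℝ≥0}
    (h : StrongLT u u') : StrongLT (mix S (gainOp S γ u) u) (mix S (gainOp S γ u') u') := by
  intro i
  have hγu : gainOp S γ u i ≤ gainOp S γ u' i :=
    gainOp_mono (fun i j => (hγ i j).monotone) (fun j => (h j).le) i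
  unfold mix
  split_ifs with hi
  · exact add_lt_add_of_le_of_lt hγu (h i)
  · have hpos : 0 < u' i := zero_le.trans_lt (h i)
    refine max_lt ?_ ((h i).trans_le (le_max_right _ _))
    unfold gainOp at hγu ⊢
    simp only [if_neg hi] at hγu ⊢
    refine (Finset.sup_lt_iff (hpos.trans_le (le_max_right _ _))).2 fun j _ => ?_
    exact ((hγ i j).lt_max_of_lt (h j) hpos).trans_le
      (max_le_max (le_sup (f := fun j => γ i j (u' j)) (mem_univ j)) le_rfl)

theorem le_smallGainMap (β : ℝ≥0 → ℝ≥0) (v : ι → ℝ≥0) : v ≤ smallGainMap S γ β v :=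
  (right_le_mix _ v).trans (le_diagOp β _)

theorem exists_lt_le_smallGainMap (hγ : ∀ i j, Monotone (γ i j)) (e : ℝ≥0 ≃o ℝ≥0)
    (hsg : ∀ s : ι → ℝ≥0, s ≠ 0 → ∃ i, gainOp S γ (diagOp S e s) i < s i)
    {w x : ι → ℝ≥0} (hw : w ≤ mix S (gainOp S γ w) x) (hx : ∃ i, x i < w i) :
    ∃ i, x i < w i ∧ w i ≤ smallGainMap S γ e.symm x i := by
  set d : ι → ℝ≥0 := fun j => if x j < w j then w j else 0 with hd
  obtain ⟨s, hs⟩ := diagOp_surjective (S := S) e.continuous e.map_bot d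
  have hs0 : s ≠ 0 := by
    rintro rfl
    obtain ⟨i, hi⟩ := hx
    exact (zero_le.trans_lt hi).ne (by simpa [diagOp_zero e.map_bot, hd, hi] using congrFun hs i)
  obtain ⟨i, hi⟩ := hsg s hs0
  have hdi : 0 < d i := zero_le.trans_lt (hi.trans_le (hs ▸ le_diagOp _ s i))
  have hxi : x i < w i := by
    by_contra h
    simp [hd, h] at hdi
  have hwd : w ≤ d ⊔ x := by
    intro j
    by_cases hj : x j < w j
    · simp [hd, hj]
    · exact (not_lt.1 hj).trans le_sup_right
  have hw' : w ≤ mix S (gainOp S γ d) (mix S (gainOp S γ x) x) :=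
    calc w ≤ mix S (gainOp S γ w) x := hw
      _ ≤ mix S (gainOp S γ (d ⊔ x)) x := mix_mono (gainOp_mono hγ hwd) le_rfl
      _ ≤ mix S (mix S (gainOp S γ d) (gainOp S γ x)) x := mix_mono (gainOp_sup_le hγ d x) le_rfl
      _ = mix S (gainOp S γ d) (mix S (gainOp S γ x) x) := mix_assoc _ _ _
  refine ⟨i, hxi, ?_⟩
  have hwi := hw' i
  have hwsi : w i = diagOp S e s i := by rw [hs]; exact (if_pos hxi).symm
  rw [hs] at hi
  rw [hwsi] at hwi ⊢
  simp only [smallGainMap, diagOp, mix] at hwi ⊢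
  split_ifs at hwi ⊢
  · exact add_le_add_symm_of_lt e hi hwi
  · exact (le_max_iff.1 hwi).resolve_left (not_le.2 hi)

theorem le_iterate_smallGainMap (hγ : ∀ i j, Monotone (γ i j)) (e : ℝ≥0 ≃o ℝ≥0)
    (hsg : ∀ s : ι → ℝ≥0, s ≠ 0 → ∃ i, gainOp S γ (diagOp S e s) i < s i)
    {w v : ι → ℝ≥0} (hw : w ≤ mix S (gainOp S γ w) v) {r : ℝ≥0} (hv : v ≤ fun _ => r)
    {k : ℕ} (hk : Fintype.card ι ≤ k) : w ≤ (smallGainMap S γ e.symm)^[k] fun _ => r := by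
  set X : ℕ → ι → ℝ≥0 := fun k => (smallGainMap S γ e.symm)^[k] fun _ => r
  have hX : Monotone X := fun _ _ hkl =>
    Function.monotone_iterate_of_id_le (le_smallGainMap _) hkl _
  refine le_of_card_le_of_exists_lt_le_succ hX (fun k hk => ?_) hk
  have hwk : w ≤ mix S (gainOp S γ w) (X k) :=
    hw.trans (mix_mono le_rfl (hv.trans (hX k.zero_le)))
  simpa only [X, Function.iterate_succ_apply'] using
    exists_lt_le_smallGainMap hγ e hsg hwk hk

theorem strongLT_smallGainMap (hγ : ∀ i j, IsGain (γ i j)) {β : ℝ≥0 → ℝ≥0} (hβ : Monotone β)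
    {u u' : ι → ℝ≥0} (h : StrongLT u u') :
    StrongLT (smallGainMap S γ β u) (smallGainMap S γ β u') :=
  diagOp_strongLT hβ (mix_gainOp_strongLT hγ h)

theorem continuous_smallGainMap (hγ : ∀ i j, Continuous (γ i j)) {β : ℝ≥0 → ℝ≥0}
    (hβ : Continuous β) : Continuous (smallGainMap S γ β) :=
  (continuous_diagOp hβ).comp ((continuous_gainOp hγ).mix continuous_id)

theorem smallGainMap_zero (hγ : ∀ i j, γ i j 0 = 0) {β : ℝ≥0 → ℝ≥0} (hβ : β 0 = 0) :
    smallGainMap S γ β 0 = 0 := by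
  have hmix : mix S (0 : ι → ℝ≥0) 0 = 0 := by
    funext i
    simp [mix]
  rw [smallGainMap, gainOp_zero hγ, hmix, diagOp_zero hβ]

end GainOperator

theorem kInf_sup_iterate_const {ι : Type*} [Fintype ι] [Nonempty ι]
    {F : (ι → ℝ≥0) → ι → ℝ≥0} (hFc : Continuous F) (hF : ∀ u, u ≤ F u) (hF0 : F 0 = 0)
    (hFlt : ∀ u u', StrongLT u u' → StrongLT (F u) (F u')) (k : ℕ) :
    KInf fun r => univ.sup fun i => F^[k] (fun _ => r) i := by
  have hge : ∀ r i, r ≤ F^[k] (fun _ => r) i := fun r =>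
    Function.id_le_iterate_of_id_le hF k _
  have hlt : ∀ {r r'} (m : ℕ), r < r' → StrongLT (F^[m] fun _ => r) (F^[m] fun _ => r') := by
    intro r r' m h
    induction m with
    | zero => exact fun _ => h
    | succ m ih =>
      simp only [Function.iterate_succ_apply']
      exact hFlt _ _ ih
  obtain ⟨i₀⟩ := ‹Nonempty ι›
  refine ⟨?_, fun r r' h => ?_, ?_, fun M => ?_⟩
  · exact Continuous.finset_sup_apply fun i _ =>
      (continuous_apply i).comp ((hFc.iterate k).comp (continuous_pi fun _ => continuous_id))
  · obtain ⟨i, -, hi⟩ := exists_mem_eq_sup univ univ_nonempty fun i => F^[k] (fun _ => r) i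
    dsimp only
    rw [hi]
    exact (hlt k h i).trans_le (le_sup (f := fun i => F^[k] (fun _ => r') i) (mem_univ i))
  · simp [← Pi.zero_def, Function.iterate_fixed hF0]
  · exact ⟨M + 1, (lt_add_one M).trans_le (le_sup_of_le (mem_univ i₀) (hge _ i₀))⟩

theorem small_gain_bound_general (n : ℕ) (hn : 1 ≤ n) (Isum : Finset (Fin n))
    (γ : Fin n → Fin n → ℝ≥0 → ℝ≥0)
    (hγ : ∀ i j, KInf (γ i j) ∨ γ i j = fun _ => 0)
    (α αinv : ℝ≥0 → ℝ≥0) (hα : KInf α)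
    (hαinv : Function.LeftInverse αinv α ∧ Function.RightInverse αinv α)
    (Γ : (Fin n → ℝ≥0) → Fin n → ℝ≥0)
    (hΓ : ∀ s i, Γ s i =
      if i ∈ Isum then ∑ j, γ i j (s j) else Finset.univ.sup fun j => γ i j (s j))
    (hsg : ∀ s : Fin n → ℝ≥0, s ≠ 0 →
      ∃ i, Γ (fun j => if j ∈ Isum then s j + α (s j) else s j) i < s i)
    (μ : (Fin n → ℝ≥0) → (Fin n → ℝ≥0) → Fin n → ℝ≥0)
    (hμ : ∀ w v i, μ w v i = if i ∈ Isum then w i + v i else max (w i) (v i))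
    (M : (Fin n → ℝ≥0) → Fin n → ℝ≥0)
    (hM : ∀ v i, M v i =
      if i ∈ Isum then μ (Γ v) v i + αinv (μ (Γ v) v i) else μ (Γ v) v i)
    (φ : ℝ≥0 → ℝ≥0)
    (hφ : ∀ r, φ r = Finset.univ.sup fun i => M^[n] (fun _ => r) i) :
    KInf φ ∧
      ∀ w v : Fin n → ℝ≥0, w ≤ μ (Γ w) v →
        Finset.univ.sup w ≤ φ (Finset.univ.sup v) := by
  have hgain : ∀ i j, IsGain (γ i j) := hγ
  let e : ℝ≥0 ≃o ℝ≥0 := hα.2.1.orderIsoOfRightInverse α αinv hαinv.2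
  obtain rfl : Γ = gainOp Isum γ := funext fun s => funext (hΓ s)
  obtain rfl : μ = mix Isum := funext fun w => funext fun v => funext (hμ w v)
  obtain rfl : M = smallGainMap Isum γ e.symm := funext fun v => funext (hM v)
  obtain rfl : φ = fun r => univ.sup fun i => (smallGainMap Isum γ e.symm)^[n] (fun _ => r) i :=
    funext hφ
  have : Nonempty (Fin n) := ⟨⟨0, hn⟩⟩
  refine ⟨?_, fun w v hwv => ?_⟩
  · exact kInf_sup_iterate_const
      (continuous_smallGainMap (fun i j => (hgain i j).continuous) e.symm.continuous)
      (le_smallGainMap _) (smallGainMap_zero (fun i j => (hgain i j).map_zero) e.symm.map_bot)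
      (fun _ _ => strongLT_smallGainMap hgain e.symm.monotone) n
  · exact sup_mono_fun fun i _ => le_iterate_smallGainMap (fun i j => (hgain i j).monotone) e
      hsg hwv (fun i => le_sup (mem_univ i)) (Fintype.card_fin n).le i

/-- Main technical lemma: under the mixed small gain condition Γ∘D_α ≱ id there is a
K∞ function φ (given explicitly by φ(r) = max component of [D̃∘μ(Γ,id)]ⁿ(r,…,r)) such
that w ≤ μ(Γ(w), v) implies |w|_max ≤ φ(|v|_max). -/
theorem small_gain_bound (n : ℕ) (hn : 1 ≤ n) (Isum : Finset (Fin n))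
    (γ : Fin n → Fin n → ℝ≥0 → ℝ≥0)
    (hγ : ∀ i j, KInf (γ i j) ∨ γ i j = fun _ => 0)
    (hγdiag : ∀ i, γ i i = fun _ => 0)
    (α αinv : ℝ≥0 → ℝ≥0) (hα : KInf α)
    (hαinv : Function.LeftInverse αinv α ∧ Function.RightInverse αinv α)
    (Γ : (Fin n → ℝ≥0) → Fin n → ℝ≥0)
    (hΓ : ∀ s i, Γ s i =
      if i ∈ Isum then ∑ j, γ i j (s j) else Finset.univ.sup fun j => γ i j (s j))
    (hsg : ∀ s : Fin n → ℝ≥0, s ≠ 0 →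
      ∃ i, Γ (fun j => if j ∈ Isum then s j + α (s j) else s j) i < s i)
    (μ : (Fin n → ℝ≥0) → (Fin n → ℝ≥0) → Fin n → ℝ≥0)
    (hμ : ∀ w v i, μ w v i = if i ∈ Isum then w i + v i else max (w i) (v i))
    (M : (Fin n → ℝ≥0) → Fin n → ℝ≥0)
    (hM : ∀ v i, M v i =
      if i ∈ Isum then μ (Γ v) v i + αinv (μ (Γ v) v i) else μ (Γ v) v i)
    (φ : ℝ≥0 → ℝ≥0)
    (hφ : ∀ r, φ r = Finset.univ.sup fun i => M^[n] (fun _ => r) i) :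
    KInf φ ∧
      ∀ w v : Fin n → ℝ≥0, w ≤ μ (Γ w) v →
        Finset.univ.sup w ≤ φ (Finset.univ.sup v) :=
  small_gain_bound_general n hn Isum γ hγ α αinv hα hαinv Γ hΓ hsg μ hμ M hM φ hφ
end

section
/- If α ∈ K∞ and γ: [0,∞) → [0,∞) satisfies (id+α)∘γ < id pointwise on (0,∞), where γ is continuous, increasing and γ(0)=0, then id − γ ∈ K∞, i.e., r ↦ r − γ(r) is continuous, strictly increasing, unbounded and vanishes at 0. -/
/-!
Pick `s` with `M < α s`. If `γ` reaches `s` at some `r > 0`, then `r - γ r > α (γ r) ≥ α s > M`;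
otherwise `γ` stays below `s` on `(0, ∞)`, so `r - γ r > M` for every `r > M + s`.
-/

open NNReal

theorem exists_lt_sub_self_of_add_comp_lt {α γ : ℝ≥0 → ℝ≥0} (hαm : Monotone α)
    (hαu : ∀ M : ℝ≥0, ∃ s, M < α s) (h : ∀ r : ℝ≥0, 0 < r → γ r + α (γ r) < r) (M : ℝ≥0) :
    ∃ r, M < r - γ r := by
  obtain ⟨s, hs⟩ := hαu M
  by_cases hreach : ∃ r, 0 < r ∧ s ≤ γ r
  · obtain ⟨r, hr, hsr⟩ := hreach
    refine ⟨r, lt_tsub_iff_left.2 ?_⟩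
    calc γ r + M < γ r + α (γ r) := add_lt_add_right (hs.trans_le (hαm hsr)) _
      _ < r := h r hr
  · push Not at hreach
    refine ⟨M + s + 1, lt_tsub_iff_left.2 ?_⟩
    calc γ (M + s + 1) + M < s + M := add_lt_add_left (hreach _ (by positivity)) _
      _ ≤ M + s + 1 := by rw [add_comm]; exact le_self_add

theorem id_sub_gamma_KInf_general (α γ : ℝ≥0 → ℝ≥0) (hα : KInf α)
    (h : ∀ r : ℝ≥0, 0 < r → γ r + α (γ r) < r) :
    (∀ r : ℝ≥0, 0 < r → γ r < r) ∧
    (∀ M : ℝ≥0, ∃ r, M < r - γ r) ∧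
    ((0 : ℝ≥0) - γ 0 = 0) :=
  ⟨fun r hr => le_self_add.trans_lt (h r hr),
    exists_lt_sub_self_of_add_comp_lt hα.2.1.monotone hα.2.2.2 h,
    zero_tsub _⟩

/-- If (id+α)∘γ < id on (0,∞) for α ∈ K∞ and γ continuous increasing with γ(0)=0, then
id − γ is positive on (0,∞), unbounded, and vanishes at 0. -/
theorem id_sub_gamma_KInf (α γ : ℝ≥0 → ℝ≥0) (hα : KInf α)
    (hγc : Continuous γ) (hγm : Monotone γ) (hγ0 : γ 0 = 0)
    (h : ∀ r : ℝ≥0, 0 < r → γ r + α (γ r) < r) :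
    (∀ r : ℝ≥0, 0 < r → γ r < r) ∧
    (∀ M : ℝ≥0, ∃ r, M < r - γ r) ∧
    ((0 : ℝ≥0) - γ 0 = 0) :=
  id_sub_gamma_KInf_general α γ hα h
end

section
/- With the setup of peeling off summands: let γ̂₁,…,γ̂ₖ ∈ K∞ satisfy id − ∑_{l=1}^k γ̂_l ∈ K∞, define η_l = (id − ∑_{j≤l} γ̂_j) ∘ γ̂_l⁻¹ and χ_l := (id + η₁⁻¹) ∘ … ∘ (id + η_{l−1}⁻¹) ∘ (id + η_l). Then χ_l ∘ γ̂_l = id for each l = 1,…,k; in particular if g_l < γ̂_l pointwise on (0,∞) then χ_l ∘ g_l < id on (0,∞). -/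
open NNReal

/-- The composition (id+η₀⁻¹)∘…∘(id+η_{j−1}⁻¹), built from a family `e` of inverses. -/
def pre (e : ℕ → ℝ≥0 → ℝ≥0) : ℕ → ℝ≥0 → ℝ≥0
  | 0 => id
  | j + 1 => pre e j ∘ fun r => r + e j r

lemma inv_strictMono {f g : ℝ≥0 → ℝ≥0} (hf : Monotone f)
    (hg : Function.RightInverse g f) : StrictMono g := by
  intro a b hab
  by_contra h
  push_neg at h
  have := hf h
  rw [hg, hg] at this
  exact absurd this hab.not_ge

/-- Peeling off summands: with η_l = (id − ∑_{j≤l} γ̂_j)∘γ̂_l⁻¹ and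
χ_l = (id+η₀⁻¹)∘…∘(id+η_{l−1}⁻¹)∘(id+η_l), one has χ_l∘γ̂_l = id; in particular
if g < γ̂_l on (0,∞) then χ_l∘g < id on (0,∞). -/
theorem chi_comp_gamma_eq_id (k : ℕ) (γ γinv ηinv : ℕ → ℝ≥0 → ℝ≥0)
    (hγ : ∀ l < k, KInf (γ l))
    (hγinv : ∀ l < k, Function.LeftInverse (γinv l) (γ l) ∧
      Function.RightInverse (γinv l) (γ l))
    (hsum : KInf (fun r => r - ∑ j ∈ Finset.range k, γ j r))
    (hηinv : ∀ l < k,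
      Function.LeftInverse (ηinv l)
        (fun r => γinv l r - ∑ j ∈ Finset.range (l + 1), γ j (γinv l r)) ∧
      Function.RightInverse (ηinv l)
        (fun r => γinv l r - ∑ j ∈ Finset.range (l + 1), γ j (γinv l r))) :
    ∀ l < k,
      (∀ r, (pre ηinv l ∘ fun r =>
        r + (γinv l r - ∑ j ∈ Finset.range (l + 1), γ j (γinv l r))) (γ l r) = r) ∧
      ∀ g : ℝ≥0 → ℝ≥0, (∀ r, 0 < r → g r < γ l r) →
        ∀ r, 0 < r → (pre ηinv l ∘ fun r =>
          r + (γinv l r - ∑ j ∈ Finset.range (l + 1), γ j (γinv l r))) (g r) < r := by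
  -- full sum is ≤ r
  have hsumle : ∀ r, ∑ j ∈ Finset.range k, γ j r ≤ r := by
    intro r
    by_contra h
    push_neg at h
    have h0 : r - ∑ j ∈ Finset.range k, γ j r = 0 := tsub_eq_zero_of_le h.le
    have hf0 := hsum.2.2.1
    have hr0 : r = 0 := hsum.2.1.injective (by simpa using h0.trans hf0.symm)
    subst hr0
    have : ∑ j ∈ Finset.range k, γ j 0 = 0 := by
      apply Finset.sum_eq_zero
      intro j hj
      exact (hγ j (Finset.mem_range.mp hj)).2.2.1
    simp [this] at h
  have hsumle' : ∀ m ≤ k, ∀ r, ∑ j ∈ Finset.range m, γ j r ≤ r := by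
    intro m hm r
    refine le_trans ?_ (hsumle r)
    exact Finset.sum_le_sum_of_subset (Finset.range_subset_range.mpr hm)
  -- the partial remainders are strictly monotone
  have hgm : ∀ m ≤ k, StrictMono (fun r => r - ∑ j ∈ Finset.range m, γ j r) := by
    intro m hm
    have key : ∀ r, r - ∑ j ∈ Finset.range m, γ j r
        = (r - ∑ j ∈ Finset.range k, γ j r) + ∑ j ∈ Finset.Ico m k, γ j r := by
      intro r
      have hsplit : ∑ j ∈ Finset.range m, γ j r + ∑ j ∈ Finset.Ico m k, γ j r
          = ∑ j ∈ Finset.range k, γ j r := by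
        simp only [Finset.range_eq_Ico]
        exact Finset.sum_Ico_consecutive _ (Nat.zero_le m) hm
      rw [← hsplit, tsub_add_eq_tsub_tsub]
      exact (tsub_add_cancel_of_le (le_tsub_of_add_le_left (hsplit ▸ hsumle r))).symm
    intro a b hab
    simp only [key]
    refine add_lt_add_of_lt_of_le (hsum.2.1 hab) ?_
    exact Finset.sum_le_sum fun j hj => ((hγ j (Finset.mem_Ico.mp hj).2).2.1.monotone hab.le)
  -- γinv is strictly monotone
  have hγinvsm : ∀ l < k, StrictMono (γinv l) :=
    fun l hl => inv_strictMono (hγ l hl).2.1.monotone (hγinv l hl).2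
  -- η_l strictly monotone
  have hηsm : ∀ l < k, StrictMono
      (fun r => γinv l r - ∑ j ∈ Finset.range (l + 1), γ j (γinv l r)) :=
    fun l hl => (hgm (l + 1) hl).comp (hγinvsm l hl)
  -- ηinv strictly monotone
  have hηinvsm : ∀ l < k, StrictMono (ηinv l) :=
    fun l hl => inv_strictMono (hηsm l hl).monotone (hηinv l hl).2
  -- pre is strictly monotone
  have hpresm : ∀ l ≤ k, StrictMono (pre ηinv l) := by
    intro l
    induction l with
    | zero => intro _; exact strictMono_id
    | succ n ih =>
      intro hn
      have hn' : n < k := hn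
      intro a b hab
      exact ih hn'.le (add_lt_add hab (hηinvsm n hn' hab))
  -- the key evaluation lemma
  have hkey : ∀ l ≤ k, ∀ r, pre ηinv l (r - ∑ j ∈ Finset.range l, γ j r) = r := by
    intro l
    induction l with
    | zero => intro _ r; simp [pre]
    | succ n ih =>
      intro hn r
      have hn' : n < k := hn
      show pre ηinv n ((r - ∑ j ∈ Finset.range (n + 1), γ j r)
        + ηinv n (r - ∑ j ∈ Finset.range (n + 1), γ j r)) = r
      have heval : ηinv n (r - ∑ j ∈ Finset.range (n + 1), γ j r) = γ n r := by
        have := (hηinv n hn').1 (γ n r)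
        simp only [(hγinv n hn').1 r] at this
        exact this
      rw [heval]
      have harith : (r - ∑ j ∈ Finset.range (n + 1), γ j r) + γ n r
          = r - ∑ j ∈ Finset.range n, γ j r := by
        rw [Finset.sum_range_succ, tsub_add_eq_tsub_tsub]
        exact tsub_add_cancel_of_le
          (le_tsub_of_add_le_left (by rw [← Finset.sum_range_succ]; exact hsumle' (n+1) hn r))
      rw [harith]
      exact ih hn'.le r
  intro l hl
  have hpart1 : ∀ r, (pre ηinv l ∘ fun r =>
      r + (γinv l r - ∑ j ∈ Finset.range (l + 1), γ j (γinv l r))) (γ l r) = r := by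
    intro r
    show pre ηinv l (γ l r + (γinv l (γ l r)
      - ∑ j ∈ Finset.range (l + 1), γ j (γinv l (γ l r)))) = r
    rw [(hγinv l hl).1 r]
    have harith : γ l r + (r - ∑ j ∈ Finset.range (l + 1), γ j r)
        = r - ∑ j ∈ Finset.range l, γ j r := by
      rw [add_comm, Finset.sum_range_succ, tsub_add_eq_tsub_tsub]
      exact tsub_add_cancel_of_le
        (le_tsub_of_add_le_left (by rw [← Finset.sum_range_succ]; exact hsumle' (l+1) hl r))
    rw [harith]
    exact hkey l hl.le r
  refine ⟨hpart1, ?_⟩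
  intro g hg r hr
  have hχsm : StrictMono (pre ηinv l ∘ fun r =>
      r + (γinv l r - ∑ j ∈ Finset.range (l + 1), γ j (γinv l r))) :=
    (hpresm l hl.le).comp (fun a b hab => add_lt_add hab (hηsm l hl hab))
  calc (pre ηinv l ∘ fun r =>
      r + (γinv l r - ∑ j ∈ Finset.range (l + 1), γ j (γinv l r))) (g r)
      < (pre ηinv l ∘ fun r =>
      r + (γinv l r - ∑ j ∈ Finset.range (l + 1), γ j (γinv l r))) (γ l r) :=
        hχsm (hg r hr)
    _ = r := hpart1 r
end

section
/- Let Γ: ℝ₊ⁿ → ℝ₊ⁿ be monotone and suppose a function V: X → ℝ₊ⁿ (limit superior vector l of trajectory norms) satisfies l ≤ μ(Γ(l), v) where μᵢ(a,b) = a + b for i ∈ I_Σ and μᵢ(a,b) = max{a,b} for i ∈ I_max, with v ∈ ℝ₊ⁿ a fixed vector, and Γ∘D_α ≱ id holds on ℝ₊ⁿ \ {0} for some α ∈ K∞. Then |l|_max ≤ φ(|v|_max) for the K∞ function φ(r) := max component of [D̃∘μ(Γ,id)]ⁿ(r,…,r), where D̃ applies id + α⁻¹ on I_Σ coordinates and identity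 on I_max coordinates. In particular, if additionally v = 0, then l = 0. -/
/-!
Let `b k` be the `k`-th iterate of `D̃ ∘ μ(Γ, id)` at the constant vector `|v|_max`, and let `S`
be the set of coordinates where `l ≤ b k` is already known. If `b (k + 1) i < l i` for every
`i ∉ S`, then `u`, the restriction of `l` to the complement of `S`, satisfies `u ≤ D_α (Γ u)`:
on `I_Σ`, `c + α⁻¹ c < l i` with `c = μ(Γ (b k), b k) i` forces `α⁻¹ c < Γ u i`, so `α (Γ u i)`
absorbs the contribution `c` of the controlled coordinates. The small gain condition excludes a
nonzero such `u`, so every iteration controls a new coordinate and `n` iterations control all.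
-/

open NNReal Finset

namespace MixedSmallGain

section Orbit

variable {ι β : Type*} [Fintype ι] [Preorder β]

theorem le_apply_card_of_exists_notMem_le {b : ℕ → ι → β} (hb : Monotone b) {l : ι → β}
    (hstep : ∀ k (S : Finset ι), S ≠ univ → (∀ j ∈ S, l j ≤ b k j) →
      ∃ i ∉ S, l i ≤ b (k + 1) i) :
    l ≤ b (Fintype.card ι) := by
  classical
  have hgrow : ∀ k ≤ Fintype.card ι, ∃ S : Finset ι, #S = k ∧ ∀ j ∈ S, l j ≤ b k j := by
    intro k
    induction k with
    | zero => exact fun _ => ⟨∅, rfl, by simp⟩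
    | succ k ih =>
      intro hk
      obtain ⟨S, hcard, hS⟩ := ih (by omega)
      have hSu : S ≠ univ := fun h => by simp [h] at hcard; omega
      obtain ⟨i, hi, hli⟩ := hstep k S hSu hS
      refine ⟨insert i S, by rw [card_insert_of_notMem hi, hcard], fun j hj => ?_⟩
      rcases mem_insert.mp hj with rfl | hj
      · exact hli
      · exact (hS j hj).trans (hb k.le_succ j)
  obtain ⟨S, hcard, hS⟩ := hgrow _ le_rfl
  obtain rfl : S = univ := eq_univ_of_card S hcard
  exact fun j => hS j (mem_univ j)

end Orbit

variable {ι : Type*} [DecidableEq ι] (I : Finset ι)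

/-- `μ` of the paper, with `I = I_Σ`. -/
def sumMax (w v : ι → ℝ≥0) : ι → ℝ≥0 := fun i =>
  if i ∈ I then w i + v i else max (w i) (v i)

/-- `D_α` of the paper for `f = α`, and `D̃` for `f = α⁻¹`. -/
def diagAdd (f : ℝ≥0 → ℝ≥0) (s : ι → ℝ≥0) : ι → ℝ≥0 := fun i =>
  if i ∈ I then s i + f (s i) else s i

variable {I}

theorem le_sumMax_right (w v : ι → ℝ≥0) : v ≤ sumMax I w v := fun i => by
  unfold sumMax; split_ifs
  · exact le_add_self
  · exact le_max_right _ _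

theorem sumMax_mono {w w' v v' : ι → ℝ≥0} (hw : w ≤ w') (hv : v ≤ v') :
    sumMax I w v ≤ sumMax I w' v' := fun i => by
  unfold sumMax; split_ifs
  · exact add_le_add (hw i) (hv i)
  · exact max_le_max (hw i) (hv i)

theorem sumMax_assoc (a b c : ι → ℝ≥0) :
    sumMax I (sumMax I a b) c = sumMax I a (sumMax I b c) := by
  funext i; unfold sumMax; split_ifs
  · exact add_assoc _ _ _
  · exact max_assoc _ _ _

theorem sumMax_zero : sumMax I (0 : ι → ℝ≥0) 0 = 0 := by
  funext i; simp [sumMax]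

theorem le_diagAdd (f : ℝ≥0 → ℝ≥0) (s : ι → ℝ≥0) : s ≤ diagAdd I f s := fun i => by
  unfold diagAdd; split_ifs
  · exact le_self_add
  · exact le_rfl

theorem diagAdd_zero {f : ℝ≥0 → ℝ≥0} (hf : f 0 = 0) : diagAdd I f 0 = 0 := by
  funext i; simp [diagAdd, hf]

variable {α αinv : ℝ≥0 → ℝ≥0}

theorem le_add_of_add_inv_lt (hα : StrictMono α) (hαinv : Function.RightInverse αinv α)
    {x t c : ℝ≥0} (hx : x ≤ t + c) (hlt : c + αinv c < x) : x ≤ t + α t := by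
  have ht : αinv c < t := by
    by_contra! h
    exact hlt.not_ge (hx.trans (by rw [add_comm c]; gcongr))
  have hc : c < α t := hαinv c ▸ hα ht
  exact hx.trans (by gcongr)

theorem le_diagAdd_of_le_sumMax (hα : StrictMono α) (hαinv : Function.RightInverse αinv α)
    {l t c : ι → ℝ≥0} {i : ι} (hl : l i ≤ sumMax I t c i) (hlt : diagAdd I αinv c i < l i) :
    l i ≤ diagAdd I α t i := by
  unfold sumMax diagAdd at *
  split_ifs at * with hi
  · exact le_add_of_add_inv_lt hα hαinv hl hlt
  · exact (le_max_iff.mp hl).resolve_right hlt.not_ge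

theorem eq_zero_of_le_diagAdd {Γ : (ι → ℝ≥0) → ι → ℝ≥0} (hΓ : Monotone Γ) (hα0 : α 0 = 0)
    (hsg : ∀ s : ι → ℝ≥0, s ≠ 0 → ∃ i, Γ (diagAdd I α s) i < s i) {u : ι → ℝ≥0}
    (hu : u ≤ diagAdd I α (Γ u)) : u = 0 := by
  have hΓu : Γ u = 0 := by
    by_contra hne
    obtain ⟨i, hi⟩ := hsg (Γ u) hne
    exact (hΓ hu i).not_gt hi
  rw [hΓu, diagAdd_zero hα0] at hu
  exact le_antisymm hu zero_le

variable [Fintype ι] (I)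

/-- `Γ` of the paper. -/
def gainMap (γ : ι → ι → ℝ≥0 → ℝ≥0) (s : ι → ℝ≥0) : ι → ℝ≥0 := fun i =>
  if i ∈ I then ∑ j, γ i j (s j) else univ.sup fun j => γ i j (s j)

/-- `D̃ ∘ μ(Γ, id)` of the paper, for `f = α⁻¹`. -/
def gainStep (γ : ι → ι → ℝ≥0 → ℝ≥0) (f : ℝ≥0 → ℝ≥0) (x : ι → ℝ≥0) : ι → ℝ≥0 :=
  diagAdd I f (sumMax I (gainMap I γ x) x)

variable {I} {γ : ι → ι → ℝ≥0 → ℝ≥0}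

theorem gainMap_mono (hγ : ∀ i j, Monotone (γ i j)) : Monotone (gainMap I γ) :=
  fun s t hst i => by
    unfold gainMap; split_ifs
    · exact sum_le_sum fun j _ => hγ i j (hst j)
    · exact sup_mono_fun fun j _ => hγ i j (hst j)

theorem gainMap_zero (hγ : ∀ i j, γ i j 0 = 0) : gainMap I γ 0 = 0 := by
  funext i; simp [gainMap, hγ]

theorem gainMap_le_sumMax_of_le_sup (hγ : ∀ i j, Monotone (γ i j)) {l u b : ι → ℝ≥0}
    (h : l ≤ u ⊔ b) : gainMap I γ l ≤ sumMax I (gainMap I γ u) (gainMap I γ b) := fun i => by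
  have hj : ∀ j, γ i j (l j) ≤ max (γ i j (u j)) (γ i j (b j)) := fun j =>
    (hγ i j).map_max ▸ hγ i j (h j)
  unfold sumMax gainMap; split_ifs
  · rw [← sum_add_distrib]
    exact sum_le_sum fun j _ => (hj j).trans (max_le_add_of_nonneg zero_le zero_le)
  · rw [← sup_sup]
    exact sup_mono_fun fun j _ => hj j

theorem le_gainStep (f : ℝ≥0 → ℝ≥0) (x : ι → ℝ≥0) : x ≤ gainStep I γ f x :=
  (le_sumMax_right _ x).trans (le_diagAdd f _)

theorem gainStep_zero (hγ : ∀ i j, γ i j 0 = 0) {f : ℝ≥0 → ℝ≥0} (hf : f 0 = 0) :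
    gainStep I γ f 0 = 0 := by
  rw [gainStep, gainMap_zero hγ, sumMax_zero, diagAdd_zero hf]

theorem exists_notMem_le_gainStep (hγ : ∀ i j, Monotone (γ i j)) (hα : StrictMono α) (hα0 : α 0 = 0)
    (hαinv : Function.RightInverse αinv α)
    (hsg : ∀ s : ι → ℝ≥0, s ≠ 0 → ∃ i, gainMap I γ (diagAdd I α s) i < s i)
    {l v : ι → ℝ≥0} (hl : l ≤ sumMax I (gainMap I γ l) v) {b : ι → ℝ≥0} (hvb : v ≤ b) {S : Finset ι} (hS : S ≠ univ)
    (hlS : ∀ j ∈ S, l j ≤ b j) : ∃ i ∉ S, l i ≤ gainStep I γ αinv b i := by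
  by_contra! hgt
  set u : ι → ℝ≥0 := fun j => if j ∈ S then 0 else l j
  have hlu : l ≤ u ⊔ b := fun j => by
    by_cases hj : j ∈ S
    · simp [u, hj, hlS j hj]
    · simp [u, hj]
  have hl' : l ≤ sumMax I (gainMap I γ u) (sumMax I (gainMap I γ b) b) :=
    calc l ≤ sumMax I (gainMap I γ l) v := hl
      _ ≤ sumMax I (sumMax I (gainMap I γ u) (gainMap I γ b)) b :=
        sumMax_mono (gainMap_le_sumMax_of_le_sup hγ hlu) hvb
      _ = _ := sumMax_assoc ..
  have hu : u ≤ diagAdd I α (gainMap I γ u) := fun j => by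
    by_cases hj : j ∈ S
    · simp [u, hj]
    · rw [show u j = l j by simp [u, hj]]
      exact le_diagAdd_of_le_sumMax hα hαinv (hl' j) (hgt j hj)
  obtain ⟨i, hi⟩ : ∃ i, i ∉ S := by
    by_contra! h
    exact hS (eq_univ_iff_forall.mpr h)
  have hui : u i = l i := by simp [u, hi]
  rw [eq_zero_of_le_diagAdd (gainMap_mono hγ) hα0 hsg hu] at hui
  exact (hgt i hi).not_ge (hui ▸ zero_le)

theorem le_gainStep_iterate_card (hγ : ∀ i j, Monotone (γ i j)) (hα : StrictMono α) (hα0 : α 0 = 0)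
    (hαinv : Function.RightInverse αinv α)
    (hsg : ∀ s : ι → ℝ≥0, s ≠ 0 → ∃ i, gainMap I γ (diagAdd I α s) i < s i)
    {l v : ι → ℝ≥0} (hl : l ≤ sumMax I (gainMap I γ l) v) {b : ι → ℝ≥0} (hvb : v ≤ b) :
    l ≤ (gainStep I γ αinv)^[Fintype.card ι] b := by
  have hmono : Monotone fun k => (gainStep I γ αinv)^[k] b := monotone_nat_of_le_succ fun k => by
    simp only [Function.iterate_succ_apply']
    exact le_gainStep _ _
  refine le_apply_card_of_exists_notMem_le hmono fun k S hS hlS => ?_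
  rw [Function.iterate_succ_apply']
  exact exists_notMem_le_gainStep hγ hα hα0 hαinv hsg hl (hvb.trans (hmono k.zero_le)) hS hlS

end MixedSmallGain

open MixedSmallGain

theorem limsup_bound_general (n : ℕ) (Isum : Finset (Fin n))
    (γ : Fin n → Fin n → ℝ≥0 → ℝ≥0)
    (hγ : ∀ i j, KInf (γ i j) ∨ γ i j = fun _ => 0)
    (α αinv : ℝ≥0 → ℝ≥0) (hα : KInf α)
    (hαinv : Function.LeftInverse αinv α ∧ Function.RightInverse αinv α)
    (Γ : (Fin n → ℝ≥0) → Fin n → ℝ≥0)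
    (hΓ : ∀ s i, Γ s i =
      if i ∈ Isum then ∑ j, γ i j (s j) else Finset.univ.sup fun j => γ i j (s j))
    (hsg : ∀ s : Fin n → ℝ≥0, s ≠ 0 →
      ∃ i, Γ (fun j => if j ∈ Isum then s j + α (s j) else s j) i < s i)
    (μ : (Fin n → ℝ≥0) → (Fin n → ℝ≥0) → Fin n → ℝ≥0)
    (hμ : ∀ w v i, μ w v i = if i ∈ Isum then w i + v i else max (w i) (v i))
    (M : (Fin n → ℝ≥0) → Fin n → ℝ≥0)
    (hM : ∀ v i, M v i =
      if i ∈ Isum then μ (Γ v) v i + αinv (μ (Γ v) v i) else μ (Γ v) v i)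
    (φ : ℝ≥0 → ℝ≥0)
    (hφ : ∀ r, φ r = Finset.univ.sup fun i => M^[n] (fun _ => r) i)
    (l v : Fin n → ℝ≥0) (hl : l ≤ μ (Γ l) v) :
    Finset.univ.sup l ≤ φ (Finset.univ.sup v) ∧ (v = 0 → l = 0) := by
  have hγmono : ∀ i j, Monotone (γ i j) := fun i j =>
    (hγ i j).elim (·.2.1.monotone) fun h => h ▸ monotone_const
  have hγ0 : ∀ i j, γ i j 0 = 0 := fun i j => (hγ i j).elim (·.2.2.1) fun h => h ▸ rfl
  have hαinv0 : αinv 0 = 0 := by simpa [hα.2.2.1] using hαinv.1 0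
  obtain rfl : μ = sumMax Isum := by funext w v i; exact hμ w v i
  obtain rfl : Γ = gainMap Isum γ := by funext s i; exact hΓ s i
  obtain rfl : M = gainStep Isum γ αinv := by funext x i; exact hM x i
  have hbound : univ.sup l ≤ φ (univ.sup v) := by
    have hle := le_gainStep_iterate_card hγmono hα.2.1 hα.2.2.1 hαinv.2 hsg hl
      (fun i => le_sup (f := v) (mem_univ i))
    rw [Fintype.card_fin] at hle
    exact hφ _ ▸ sup_mono_fun fun i _ => hle i
  refine ⟨hbound, ?_⟩
  rintro rfl
  have hφ0 : φ (univ.sup (0 : Fin n → ℝ≥0)) = 0 := by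
    rw [hφ, show univ.sup (0 : Fin n → ℝ≥0) = 0 from sup_bot _, ← Pi.zero_def,
      Function.iterate_fixed (gainStep_zero hγ0 hαinv0)]
    exact sup_bot _
  funext i
  exact le_antisymm ((le_sup (mem_univ i)).trans (hbound.trans hφ0.le)) zero_le

/-- Asymptotic gain bound: if the vector l of limsups satisfies l ≤ μ(Γ(l), v) and the
mixed small gain condition Γ∘D_α ≱ id holds, then |l|_max ≤ φ(|v|_max) with
φ(r) = max component of [D̃∘μ(Γ,id)]ⁿ(r,…,r); in particular v = 0 implies l = 0. -/
theorem limsup_bound (n : ℕ) (hn : 1 ≤ n) (Isum : Finset (Fin n))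
    (γ : Fin n → Fin n → ℝ≥0 → ℝ≥0)
    (hγ : ∀ i j, KInf (γ i j) ∨ γ i j = fun _ => 0)
    (hγdiag : ∀ i, γ i i = fun _ => 0)
    (α αinv : ℝ≥0 → ℝ≥0) (hα : KInf α)
    (hαinv : Function.LeftInverse αinv α ∧ Function.RightInverse αinv α)
    (Γ : (Fin n → ℝ≥0) → Fin n → ℝ≥0) (hΓmono : Monotone Γ)
    (hΓ : ∀ s i, Γ s i =
      if i ∈ Isum then ∑ j, γ i j (s j) else Finset.univ.sup fun j => γ i j (s j))
    (hsg : ∀ s : Fin n → ℝ≥0, s ≠ 0 →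
      ∃ i, Γ (fun j => if j ∈ Isum then s j + α (s j) else s j) i < s i)
    (μ : (Fin n → ℝ≥0) → (Fin n → ℝ≥0) → Fin n → ℝ≥0)
    (hμ : ∀ w v i, μ w v i = if i ∈ Isum then w i + v i else max (w i) (v i))
    (M : (Fin n → ℝ≥0) → Fin n → ℝ≥0)
    (hM : ∀ v i, M v i =
      if i ∈ Isum then μ (Γ v) v i + αinv (μ (Γ v) v i) else μ (Γ v) v i)
    (φ : ℝ≥0 → ℝ≥0)
    (hφ : ∀ r, φ r = Finset.univ.sup fun i => M^[n] (fun _ => r) i)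
    (l v : Fin n → ℝ≥0) (hl : l ≤ μ (Γ l) v) :
    Finset.univ.sup l ≤ φ (Finset.univ.sup v) ∧ (v = 0 → l = 0) :=
  limsup_bound_general n Isum γ hγ α αinv hα hαinv Γ hΓ hsg μ hμ M hM φ hφ l v hl
end
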